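/- arXiv:1011.2587 — 4 statements merged into one kernel-verified Lean document; each statement's English description precedes it below -/
import Mathlib

section
/- If a nonincreasing positive sequence (a_k) satisfies (a_{k+1}-a_k)/a_k = o(a_{k+1}) as k \to \infty, then for every \epsilon > 0 there exists J such that for all k \ge j \ge J, a_j/a_k \le \exp( \epsilon \sum_{i=j}^{k} a_i ). -/
open Filter

/-!
The hypothesis says `1 / a k - 1 / a (k + 1) = o(1)`, so eventually
`a n / a (n + 1) = 1 + a n * (1 / a (n + 1) - 1 / a n) ≤ 1 + ε * a n ≤ exp (ε * a n)`,
and `a j / a k` is the telescoping product of these ratios over `j ≤ n < k`.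
-/

lemma div_le_exp_mul_of_neg_le {x y ε : ℝ} (hx : 0 < x) (hy : 0 < y)
    (h : -ε ≤ (y - x) / (x * y)) : x / y ≤ Real.exp (ε * x) := by
  have hlin : x / y ≤ ε * x + 1 := by
    rw [le_div_iff₀ (mul_pos hx hy)] at h
    rw [div_le_iff₀ hy]
    nlinarith
  exact hlin.trans (Real.add_one_le_exp _)

lemma div_le_exp_sum_Ico_of_forall_div_succ_le {f g : ℕ → ℝ} (hf : ∀ n, 0 < f n) {j k : ℕ}
    (hjk : j ≤ k) (hstep : ∀ n, j ≤ n → f n / f (n + 1) ≤ Real.exp (g n)) :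
    f j / f k ≤ Real.exp (∑ i ∈ Finset.Ico j k, g i) := by
  induction k, hjk using Nat.le_induction with
  | base => simp [div_self (hf j).ne']
  | succ k hjk ih =>
    have htelescope : f j / f (k + 1) = f j / f k * (f k / f (k + 1)) := by
      field_simp [(hf k).ne']
    rw [htelescope, Finset.sum_Ico_succ_top hjk, Real.exp_add]
    exact mul_le_mul ih (hstep k hjk) (div_nonneg (hf k).le (hf (k + 1)).le) (Real.exp_nonneg _)

theorem stmt_4_general (a : ℕ → ℝ)
    (hpos : ∀ k, 0 < a k)
    (hsmall : Tendsto (fun k : ℕ => (a (k + 1) - a k) / (a k * a (k + 1))) atTop (nhds 0)) :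
    ∀ ε > (0 : ℝ), ∃ J : ℕ, ∀ j k : ℕ, J ≤ j → j ≤ k →
      a j / a k ≤ Real.exp (ε * ∑ i ∈ Finset.Icc j k, a i) := by
  intro ε hε
  obtain ⟨J, hJ⟩ := eventually_atTop.mp (hsmall.eventually (Ici_mem_nhds (neg_lt_zero.mpr hε)))
  refine ⟨J, fun j k hJj hjk => ?_⟩
  have hIco : a j / a k ≤ Real.exp (∑ i ∈ Finset.Ico j k, ε * a i) :=
    div_le_exp_sum_Ico_of_forall_div_succ_le hpos hjk fun n hjn =>
      div_le_exp_mul_of_neg_le (hpos n) (hpos (n + 1)) (hJ n (hJj.trans hjn))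
  refine hIco.trans (Real.exp_le_exp.mpr ?_)
  rw [← Finset.mul_sum]
  exact mul_le_mul_of_nonneg_left
    (Finset.sum_le_sum_of_subset_of_nonneg Finset.Ico_subset_Icc_self fun i _ _ => (hpos i).le)
    hε.le

theorem stmt_4 (a : ℕ → ℝ)
    (hpos : ∀ k, 0 < a k) (hmono : Antitone a)
    (hsmall : Tendsto (fun k : ℕ => (a (k + 1) - a k) / (a k * a (k + 1))) atTop (nhds 0)) :
    ∀ ε > (0 : ℝ), ∃ J : ℕ, ∀ j k : ℕ, J ≤ j → j ≤ k →
      a j / a k ≤ Real.exp (ε * ∑ i ∈ Finset.Icc j k, a i) :=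
  stmt_4_general a hpos hsmall
end

section
/- Let (a_k) be a positive sequence with a_k \to 0 and \sum_k a_k = \infty, and let c > 0 and r \ge 1. Then there exists a constant c_1 such that for all k \ge 1, \sum_{i=1}^{k} a_i^{r} \exp( -c \sum_{j=i+1}^{k} a_j ) \le c_1. -/
/-!
Write `S k` for the sum. Splitting off the last term gives the recursion
`S (k + 1) = exp (-c a (k+1)) * S k + a (k+1) ^ r`, so `S k ≤ C` for all `k` as soon as every
weight satisfies `a i ^ r ≤ C * (1 - exp (-c a i))`. Since `a` is bounded, say by `D`, and `r ≥ 1`,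
we have `a i ^ r ≤ D ^ (r - 1) * a i`, and `c a i ≤ exp (c D) * (1 - exp (-c a i))`
because `x ≤ exp x - 1`; this gives `C = D ^ (r - 1) * exp (c D) / c`.
-/

open Filter Finset Real

noncomputable def discountedSum (c : ℝ) (w b : ℕ → ℝ) (k : ℕ) : ℝ :=
  ∑ i ∈ Icc 1 k, w i * exp (-c * ∑ j ∈ Icc (i + 1) k, b j)

theorem discountedSum_zero (c : ℝ) (w b : ℕ → ℝ) : discountedSum c w b 0 = 0 := by
  simp [discountedSum]

theorem discountedSum_succ (c : ℝ) (w b : ℕ → ℝ) (k : ℕ) :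
    discountedSum c w b (k + 1) = exp (-(c * b (k + 1))) * discountedSum c w b k + w (k + 1) := by
  have hlast : ∑ j ∈ Icc (k + 1 + 1) (k + 1), b j = 0 := by simp
  unfold discountedSum
  rw [sum_Icc_succ_top (by omega), hlast, mul_zero, exp_zero, mul_one, mul_sum]
  congr 1
  refine sum_congr rfl fun i hi => ?_
  rw [sum_Icc_succ_top (by simp at hi; omega), mul_add, exp_add]
  ring_nf

theorem discountedSum_le {c C : ℝ} {w b : ℕ → ℝ} (hC : 0 ≤ C)
    (hw : ∀ i, w i ≤ C * (1 - exp (-(c * b i)))) (k : ℕ) : discountedSum c w b k ≤ C := by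
  induction k with
  | zero => simpa [discountedSum_zero] using hC
  | succ k ih =>
    rw [discountedSum_succ]
    nlinarith [hw (k + 1), exp_pos (-(c * b (k + 1)))]

theorem Real.rpow_le_rpow_sub_one_mul {x D r : ℝ} (hx : 0 ≤ x) (hxD : x ≤ D) (hr : 1 ≤ r) :
    x ^ r ≤ D ^ (r - 1) * x := by
  calc x ^ r = x ^ (r - 1) * x := by
        rw [← rpow_add_one' hx (by linarith), sub_add_cancel]
    _ ≤ D ^ (r - 1) * x := by gcongr

theorem Real.le_exp_mul_one_sub_exp_neg {x D : ℝ} (hx : 0 ≤ x) (hxD : x ≤ D) :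
    x ≤ exp D * (1 - exp (-x)) := by
  have hnonneg : 0 ≤ 1 - exp (-x) := by simpa using hx
  calc x ≤ exp x - 1 := by linarith [add_one_le_exp x]
    _ = exp x * (1 - exp (-x)) := by rw [mul_sub, ← exp_add]; simp
    _ ≤ exp D * (1 - exp (-x)) := by gcongr

theorem stmt_5_general (a : ℕ → ℝ) (c r : ℝ)
    (hpos : ∀ k, 0 < a k) (hlim : Tendsto a atTop (nhds 0))
    (hc : 0 < c) (hr : 1 ≤ r) :
    ∃ c₁ : ℝ, ∀ k : ℕ, 1 ≤ k →
      ∑ i ∈ Finset.Icc 1 k, (a i) ^ r * Real.exp (-c * ∑ j ∈ Finset.Icc (i + 1) k, a j)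
        ≤ c₁ := by
  obtain ⟨D, hD⟩ := hlim.bddAbove_range
  have haD : ∀ i, a i ≤ D := fun i => hD ⟨i, rfl⟩
  have hD0 : 0 ≤ D := (hpos 0).le.trans (haD 0)
  refine ⟨D ^ (r - 1) * exp (c * D) / c, fun k _ => discountedSum_le
    (div_nonneg (mul_nonneg (rpow_nonneg hD0 _) (exp_pos _).le) hc.le) (fun i => ?_) k⟩
  have hca := le_exp_mul_one_sub_exp_neg (mul_nonneg hc.le (hpos i).le)
    (mul_le_mul_of_nonneg_left (haD i) hc.le)
  calc a i ^ r ≤ D ^ (r - 1) * a i := rpow_le_rpow_sub_one_mul (hpos i).le (haD i) hr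
    _ = D ^ (r - 1) / c * (c * a i) := by field_simp
    _ ≤ D ^ (r - 1) / c * (exp (c * D) * (1 - exp (-(c * a i)))) := by gcongr
    _ = D ^ (r - 1) * exp (c * D) / c * (1 - exp (-(c * a i))) := by ring

theorem stmt_5 (a : ℕ → ℝ) (c r : ℝ)
    (hpos : ∀ k, 0 < a k) (hlim : Tendsto a atTop (nhds 0)) (hdiv : ¬ Summable a)
    (hc : 0 < c) (hr : 1 ≤ r) :
    ∃ c₁ : ℝ, ∀ k : ℕ, 1 ≤ k →
      ∑ i ∈ Finset.Icc 1 k, (a i) ^ r * Real.exp (-c * ∑ j ∈ Finset.Icc (i + 1) k, a j)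
        ≤ c₁ :=
  stmt_5_general a c r hpos hlim hc hr
end

section
/- Let S_1,\dots,S_{m-1} > 0 and S \ge S_1 + \cdots + S_{m-1} with S > \sum_{i=1}^{m-1} S_i (i.e., S = \sum S_i + S_m with S_m > 0). Then the (m-1)\times(m-1) matrix F with entries F_{ii} = -(S_i/S)(1 - S_i/S) and F_{ij} = S_i S_j / S^2 for i \ne j is negative definite. -/
/-!
Writing `s i = S i.castSucc` and `T = ∑ i, S i`, the matrix is `T⁻¹ • (T⁻¹ • s sᵀ - diag s)`, whose
quadratic form is `T⁻¹ * (T⁻¹ * (s ⬝ᵥ z) ^ 2 - ∑ i, s i * z i ^ 2)`. By the weighted Cauchy–Schwarz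
inequality `(s ⬝ᵥ z) ^ 2 ≤ (∑ i, s i) * ∑ i, s i * z i ^ 2`, and `∑ i, s i < T` because the last
weight `S (Fin.last d)` is positive, so the bracket is negative.
-/

open Matrix

section

variable {ι : Type*} [Fintype ι]

theorem sq_sum_mul_lt_mul_sum_mul_sq {w z : ι → ℝ} {T : ℝ} (hw : ∀ i, 0 < w i)
    (hT : ∑ i, w i < T) (hz : z ≠ 0) :
    (∑ i, w i * z i) ^ 2 < T * ∑ i, w i * z i ^ 2 := by
  obtain ⟨i, hi⟩ : ∃ i, z i ≠ 0 := Function.ne_iff.mp hz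
  have hpos : 0 < ∑ i, w i * z i ^ 2 :=
    Finset.sum_pos' (fun j _ => by have := hw j; positivity)
      ⟨i, Finset.mem_univ i, by have := hw i; positivity⟩
  calc (∑ i, w i * z i) ^ 2 ≤ (∑ i, w i) * ∑ i, w i * z i ^ 2 :=
        Finset.sum_sq_le_sum_mul_sum_of_sq_le_mul _ (fun i _ => (hw i).le)
          (fun i _ => by have := hw i; positivity) (fun i _ => (by ring : _ = _).le)
    _ < T * ∑ i, w i * z i ^ 2 := mul_lt_mul_of_pos_right hT hpos

theorem dotProduct_vecMulVec_self_mulVec (s z : ι → ℝ) :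
    z ⬝ᵥ (vecMulVec s s *ᵥ z) = (s ⬝ᵥ z) ^ 2 := by
  rw [vecMulVec_mulVec, op_smul_eq_smul, dotProduct_smul, dotProduct_comm z s, smul_eq_mul, sq]

theorem dotProduct_diagonal_mulVec [DecidableEq ι] (s z : ι → ℝ) :
    z ⬝ᵥ (diagonal s *ᵥ z) = ∑ i, s i * z i ^ 2 :=
  Finset.sum_congr rfl fun i _ => by rw [mulVec_diagonal]; ring

theorem dotProduct_smul_vecMulVec_sub_diagonal_mulVec_neg [DecidableEq ι] {s z : ι → ℝ} {T : ℝ}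
    (hs : ∀ i, 0 < s i) (hT : ∑ i, s i < T) (hz : z ≠ 0) :
    z ⬝ᵥ ((T⁻¹ • vecMulVec s s - diagonal s) *ᵥ z) < 0 := by
  have hT0 : 0 < T := (Finset.sum_nonneg fun i _ => (hs i).le).trans_lt hT
  rw [sub_mulVec, dotProduct_sub, smul_mulVec, dotProduct_smul, dotProduct_vecMulVec_self_mulVec,
    dotProduct_diagonal_mulVec, smul_eq_mul, sub_neg, inv_mul_lt_iff₀ hT0, dotProduct]
  exact sq_sum_mul_lt_mul_sum_mul_sq hs hT hz

end

theorem stmt_8_general (d : ℕ) (S : Fin (d + 1) → ℝ) (hS : ∀ i, 0 < S i)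
    (Stot : ℝ) (hStot : Stot = ∑ i, S i)
    (F : Matrix (Fin d) (Fin d) ℝ)
    (hF : ∀ i j : Fin d, F i j =
      if i = j then -(S i.castSucc / Stot) * (1 - S i.castSucc / Stot)
      else S i.castSucc * S j.castSucc / Stot ^ 2) :
    ∀ z : Fin d → ℝ, z ≠ 0 → z ⬝ᵥ F.mulVec z < 0 := by
  intro z hz
  set s : Fin d → ℝ := fun i => S i.castSucc
  have hsum : ∑ i, s i < Stot := by
    rw [hStot, Fin.sum_univ_castSucc]
    exact lt_add_of_pos_right _ (hS _)
  have hF' : F = Stot⁻¹ • (Stot⁻¹ • vecMulVec s s - diagonal s) := by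
    ext i j
    simp only [hF, Matrix.smul_apply, Matrix.sub_apply, vecMulVec_apply, diagonal_apply, smul_eq_mul]
    split_ifs with h
    · subst h; ring
    · ring
  have hStot0 : 0 < Stot := hStot ▸ Finset.sum_pos (fun i _ => hS i) Finset.univ_nonempty
  rw [hF', smul_mulVec, dotProduct_smul, smul_eq_mul]
  exact mul_neg_of_pos_of_neg (inv_pos.mpr hStot0)
    (dotProduct_smul_vecMulVec_sub_diagonal_mulVec_neg (fun _ => hS _) hsum hz)

theorem stmt_8 (d : ℕ) (hd : 1 ≤ d) (S : Fin (d + 1) → ℝ) (hS : ∀ i, 0 < S i)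
    (Stot : ℝ) (hStot : Stot = ∑ i, S i)
    (F : Matrix (Fin d) (Fin d) ℝ)
    (hF : ∀ i j : Fin d, F i j =
      if i = j then -(S i.castSucc / Stot) * (1 - S i.castSucc / Stot)
      else S i.castSucc * S j.castSucc / Stot ^ 2) :
    ∀ z : Fin d → ℝ, z ≠ 0 → z ⬝ᵥ F.mulVec z < 0 :=
  stmt_8_general d S hS Stot hStot F hF
end

section
/- With v and h as defined (v(\theta) = -\log(1 - (1/2)\sum_j (S_j/S - \pi_j)^2), h(\theta) = (S_1/S - \pi_1, \dots, S_{m-1}/S - \pi_{m-1})), the inner product satisfies \langle \nabla v(\theta), h(\theta) \rangle = -(1/\Lambda(\theta)) ( b\,\sigma_\xi^2 + b(1-b)\mu_\xi^2 ) \le 0, where \Lambda(\theta) = 1 - (1/2)\sum_j (S_j/S - \pi_j)^2, b = \sum_{j=1}^{m-1} S_j/S, and \mu_\xi, \sigma_\xi^2 are the mean and variance of the random variable taking value S_i/S - \pi_i with probability S_i/(bS). Moreover equality holds if and only if h(\theta) = 0. -/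
/-!
Write `p_j = S_j / S` and `x = h(θ) = p - π`. Since `∂p_j/∂θ_k = p_j (p_k - δ_jk)`, the chain rule
gives `⟨∇v, h⟩ = -(1/Λ) (∑ p_j x_j² - (∑ p_j x_j)²)`, and expanding the mean and variance of the
distribution `p / b` shows that the bracket is `b σ² + b (1 - b) μ²`. By Cauchy–Schwarz
`(∑ p_j x_j)² ≤ b ∑ p_j x_j²`, so the bracket is at least `(1 - b) ∑ p_j x_j²`, which vanishes only
at `x = 0` because `b < 1` and `p > 0`. Finally `Λ > 0` since `(p_j - π_j)² ≤ p_j + π_j`.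
-/

open Finset

section

open Real ContinuousLinearMap

variable {ι : Type*} [Fintype ι]

theorem sum_mul_mul_sum_sub_eq (q x : ι → ℝ) :
    ∑ j, x j * (q j * (∑ k, q k * x k - x j)) = (∑ j, q j * x j) ^ 2 - ∑ j, q j * x j ^ 2 := by
  have hterm : ∀ j, x j * (q j * (∑ k, q k * x k - x j))
      = q j * x j * ∑ k, q k * x k - q j * x j ^ 2 := fun j => by ring
  rw [sum_congr rfl fun j _ => hterm j, sum_sub_distrib, ← sum_mul, sq]

theorem mul_variance_add_eq {q x : ι → ℝ} {b : ℝ} (hb : b ≠ 0) :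
    b * (∑ j, x j ^ 2 * (q j / b) - (∑ j, x j * (q j / b)) ^ 2)
        + b * (1 - b) * (∑ j, x j * (q j / b)) ^ 2
      = ∑ j, q j * x j ^ 2 - (∑ j, q j * x j) ^ 2 := by
  simp only [← mul_div_assoc, ← sum_div]
  field_simp
  simp only [mul_comm (x _ ^ 2), mul_comm (x _)]
  ring

theorem one_sub_sum_mul_le {q : ι → ℝ} (hq : ∀ j, 0 ≤ q j) (x : ι → ℝ) :
    (1 - ∑ j, q j) * ∑ j, q j * x j ^ 2 ≤ ∑ j, q j * x j ^ 2 - (∑ j, q j * x j) ^ 2 := by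
  have := sum_sq_le_sum_mul_sum_of_sq_le_mul univ (r := fun j => q j * x j)
    (fun j _ => hq j) (fun j _ => mul_nonneg (hq j) (sq_nonneg (x j)))
    (fun j _ => (by ring : _ = q j * (q j * x j ^ 2)).le)
  linarith

theorem sq_sum_mul_le_sum_mul_sq {q : ι → ℝ} (hq : ∀ j, 0 ≤ q j) (hs : ∑ j, q j ≤ 1)
    (x : ι → ℝ) : (∑ j, q j * x j) ^ 2 ≤ ∑ j, q j * x j ^ 2 := by
  have := one_sub_sum_mul_le hq x
  have : 0 ≤ (1 - ∑ j, q j) * ∑ j, q j * x j ^ 2 :=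
    mul_nonneg (by linarith) (sum_nonneg fun j _ => mul_nonneg (hq j) (sq_nonneg _))
  linarith

theorem sq_sum_mul_eq_sum_mul_sq_iff {q : ι → ℝ} (hq : ∀ j, 0 < q j) (hs : ∑ j, q j < 1)
    (x : ι → ℝ) : (∑ j, q j * x j) ^ 2 = ∑ j, q j * x j ^ 2 ↔ x = 0 := by
  refine ⟨fun heq => ?_, by rintro rfl; simp⟩
  have hterm : ∀ j ∈ univ, 0 ≤ q j * x j ^ 2 := fun j _ => mul_nonneg (hq j).le (sq_nonneg _)
  have hP : ∑ j, q j * x j ^ 2 = 0 := by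
    have := one_sub_sum_mul_le (fun j => (hq j).le) x
    rw [heq, sub_self] at this
    exact le_antisymm (nonpos_of_mul_nonpos_right this (by linarith)) (sum_nonneg hterm)
  funext j
  simpa [(hq j).ne'] using (sum_eq_zero_iff_of_nonneg hterm).1 hP j (mem_univ j)

-- In the paper's notation `expWeight (w ∘ castSucc) w_m θ j = S_j / S`, `1 - halfSqDist π p = Λ`
-- and `lyapunov π p = v`.
noncomputable def expWeight (a : ι → ℝ) (c : ℝ) (θ : ι → ℝ) (j : ι) : ℝ :=
  a j * exp (-θ j) / (∑ k, a k * exp (-θ k) + c)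

noncomputable def halfSqDist (r y : ι → ℝ) : ℝ :=
  1 / 2 * ∑ j, (y j - r j) ^ 2

noncomputable def lyapunov (r y : ι → ℝ) : ℝ :=
  -log (1 - halfSqDist r y)

theorem sum_mul_exp_neg_add_pos {a : ι → ℝ} {c : ℝ} (ha : ∀ k, 0 ≤ a k) (hc : 0 < c)
    (θ : ι → ℝ) : 0 < ∑ k, a k * exp (-θ k) + c := by
  have : 0 ≤ ∑ k, a k * exp (-θ k) := sum_nonneg fun k _ => by have := ha k; positivity
  linarith

theorem expWeight_pos {a : ι → ℝ} {c : ℝ} (ha : ∀ k, 0 < a k) (hc : 0 < c) (θ : ι → ℝ)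
    (j : ι) : 0 < expWeight a c θ j :=
  div_pos (mul_pos (ha j) (exp_pos _)) (sum_mul_exp_neg_add_pos (fun k => (ha k).le) hc θ)

theorem sum_expWeight_lt_one {a : ι → ℝ} {c : ℝ} (ha : ∀ k, 0 ≤ a k) (hc : 0 < c)
    (θ : ι → ℝ) : ∑ j, expWeight a c θ j < 1 := by
  have hden := sum_mul_exp_neg_add_pos ha hc θ
  simp only [expWeight, ← sum_div]
  rw [div_lt_one hden]
  linarith

theorem halfSqDist_lt_one {p r : ι → ℝ} (hp : ∀ j, 0 ≤ p j) (hr : ∀ j, 0 ≤ r j)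
    (hps : ∑ j, p j < 1) (hrs : ∑ j, r j ≤ 1) : halfSqDist r p < 1 := by
  have hterm : ∀ j, (p j - r j) ^ 2 ≤ p j + r j := fun j => by
    have hp1 : p j ≤ 1 := (single_le_sum (fun k _ => hp k) (mem_univ j)).trans hps.le
    have hr1 : r j ≤ 1 := (single_le_sum (fun k _ => hr k) (mem_univ j)).trans hrs
    nlinarith [hp j, hr j]
  have := sum_le_sum fun j (_ : j ∈ univ) => hterm j
  rw [sum_add_distrib] at this
  unfold halfSqDist
  linarith

theorem hasFDerivAt_expWeight_apply {a : ι → ℝ} {c : ℝ} {θ : ι → ℝ}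
    (hden : ∑ k, a k * exp (-θ k) + c ≠ 0) (j : ι) :
    HasFDerivAt (fun θ => expWeight a c θ j)
      (expWeight a c θ j • (∑ k, expWeight a c θ k • (proj k : (ι → ℝ) →L[ℝ] ℝ) - proj j)) θ := by
  have hE : ∀ k, HasFDerivAt (fun θ : ι → ℝ => a k * exp (-θ k))
      ((a k * exp (-θ k)) • -(proj k : (ι → ℝ) →L[ℝ] ℝ)) θ := fun k => by
    simpa [smul_smul] using ((hasFDerivAt_apply k θ).neg.exp).const_mul (a k)
  have hD := (HasFDerivAt.fun_sum (u := univ) fun k _ => hE k).add_const c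
  refine ((hE j).mul ((hasDerivAt_inv hden).comp_hasFDerivAt θ hD)).congr_fderiv ?_
  ext u
  simp only [smul_neg, sum_neg_distrib, neg_smul, neg_neg, Function.comp_apply, add_apply,
    smul_apply, _root_.sum_apply, proj_apply, smul_eq_mul, neg_apply, expWeight, sub_apply,
    div_mul_eq_mul_div, ← sum_div]
  field_simp
  ring

theorem hasFDerivAt_halfSqDist (r y : ι → ℝ) :
    HasFDerivAt (halfSqDist r) (∑ j, (y j - r j) • (proj j : (ι → ℝ) →L[ℝ] ℝ)) y := by
  have hsq : ∀ j, HasFDerivAt (fun y : ι → ℝ => (y j - r j) ^ 2)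
      ((2 * (y j - r j)) • (proj j : (ι → ℝ) →L[ℝ] ℝ)) y := fun j => by
    simpa using ((hasFDerivAt_apply j y).sub_const (r j)).pow 2
  refine ((HasFDerivAt.fun_sum (u := univ) fun j _ => hsq j).const_mul (1 / 2)).congr_fderiv ?_
  ext u
  simp only [smul_apply, _root_.sum_apply, proj_apply, smul_eq_mul, mul_sum]
  exact sum_congr rfl fun j _ => by ring

theorem hasFDerivAt_lyapunov {r y : ι → ℝ} (hy : 1 - halfSqDist r y ≠ 0) :
    HasFDerivAt (lyapunov r)
      ((1 - halfSqDist r y)⁻¹ • ∑ j, (y j - r j) • (proj j : (ι → ℝ) →L[ℝ] ℝ)) y := by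
  have h := (((hasFDerivAt_halfSqDist r y).const_sub 1).log hy).neg
  rwa [smul_neg, neg_neg] at h

theorem fderiv_lyapunov_comp_expWeight_apply {a r : ι → ℝ} {c : ℝ} {θ : ι → ℝ}
    (hden : ∑ k, a k * exp (-θ k) + c ≠ 0) (hΛ : 1 - halfSqDist r (expWeight a c θ) ≠ 0)
    (u : ι → ℝ) :
    fderiv ℝ (fun θ => lyapunov r (expWeight a c θ)) θ u =
      (1 - halfSqDist r (expWeight a c θ))⁻¹ * ∑ j, (expWeight a c θ j - r j) *
        (expWeight a c θ j * (∑ k, expWeight a c θ k * u k - u j)) := by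
  have hp := (hasFDerivAt_pi (φ := fun j θ => expWeight a c θ j)).2 fun j =>
    hasFDerivAt_expWeight_apply hden j
  have hv : HasFDerivAt (fun θ => lyapunov r (expWeight a c θ)) _ θ :=
    (hasFDerivAt_lyapunov hΛ).comp θ hp
  rw [hv.fderiv]
  simp only [smul_comp, smul_apply, comp_apply, coe_pi', sub_apply, _root_.sum_apply, proj_apply,
    smul_eq_mul]

theorem fderiv_lyapunov_comp_expWeight_apply_sub {a r : ι → ℝ} {c : ℝ} {θ : ι → ℝ}
    (hden : ∑ k, a k * exp (-θ k) + c ≠ 0) (hΛ : 1 - halfSqDist r (expWeight a c θ) ≠ 0) :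
    fderiv ℝ (fun θ => lyapunov r (expWeight a c θ)) θ (expWeight a c θ - r) =
      -(1 - halfSqDist r (expWeight a c θ))⁻¹ *
        (∑ j, expWeight a c θ j * (expWeight a c θ j - r j) ^ 2
          - (∑ j, expWeight a c θ j * (expWeight a c θ j - r j)) ^ 2) := by
  rw [fderiv_lyapunov_comp_expWeight_apply hden hΛ]
  simp only [Pi.sub_apply]
  rw [sum_mul_mul_sum_sub_eq]
  ring

end

theorem stmt_13 (d : ℕ) (hd : 1 ≤ d)
    (w π : Fin (d + 1) → ℝ) (hw : ∀ i, 0 < w i)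
    (hπ : ∀ i, 0 < π i) (hπsum : ∑ i, π i = 1)
    (Si : (Fin d → ℝ) → Fin d → ℝ)
    (hSi : ∀ θ i, Si θ i = w i.castSucc * Real.exp (-θ i))
    (Stot : (Fin d → ℝ) → ℝ)
    (hStot : ∀ θ, Stot θ = (∑ i : Fin d, Si θ i) + w (Fin.last d))
    (h : (Fin d → ℝ) → Fin d → ℝ)
    (hh : ∀ θ i, h θ i = Si θ i / Stot θ - π i.castSucc)
    (Λ : (Fin d → ℝ) → ℝ)
    (hΛ : ∀ θ, Λ θ = 1 - (1 / 2) * ∑ j : Fin d, (Si θ j / Stot θ - π j.castSucc) ^ 2)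
    (v : (Fin d → ℝ) → ℝ)
    (hv : ∀ θ, v θ = -Real.log (Λ θ))
    (b μξ σξ2 : (Fin d → ℝ) → ℝ)
    (hb : ∀ θ, b θ = ∑ j : Fin d, Si θ j / Stot θ)
    (hμ : ∀ θ, μξ θ = ∑ j : Fin d,
      (Si θ j / Stot θ - π j.castSucc) * (Si θ j / (b θ * Stot θ)))
    (hσ : ∀ θ, σξ2 θ = (∑ j : Fin d,
      (Si θ j / Stot θ - π j.castSucc) ^ 2 * (Si θ j / (b θ * Stot θ))) - (μξ θ) ^ 2) :
    ∀ θ : Fin d → ℝ,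
      fderiv ℝ v θ (h θ)
          = -(1 / Λ θ) * (b θ * σξ2 θ + b θ * (1 - b θ) * (μξ θ) ^ 2) ∧
        fderiv ℝ v θ (h θ) ≤ 0 ∧
        (fderiv ℝ v θ (h θ) = 0 ↔ h θ = 0) := by
  intro θ
  set a : Fin d → ℝ := fun i => w i.castSucc
  set c := w (Fin.last d)
  set r : Fin d → ℝ := fun j => π j.castSucc
  set p := expWeight a c θ
  have hp : ∀ θ j, Si θ j / Stot θ = expWeight a c θ j := fun θ j => by
    simp only [hSi, hStot, expWeight, a, c]
  have hv' : v = fun θ => lyapunov r (expWeight a c θ) :=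
    funext fun θ => by simp only [hv, hΛ, hp, lyapunov, halfSqDist, r]
  have hΛθ : Λ θ = 1 - halfSqDist r p := by simp only [hΛ, hp, halfSqDist, r, p]
  have hhθ : h θ = p - r := funext fun j => by simp only [hh, hp, Pi.sub_apply, r, p]
  have ha : ∀ k, 0 < a k := fun k => hw k.castSucc
  have hden : 0 < ∑ k, a k * Real.exp (-θ k) + c :=
    sum_mul_exp_neg_add_pos (fun k => (ha k).le) (hw _) θ
  have hpos : ∀ j, 0 < p j := expWeight_pos ha (hw _) θ
  have hps : ∑ j, p j < 1 := sum_expWeight_lt_one (fun k => (ha k).le) (hw _) θ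
  have hrs : ∑ j, r j ≤ 1 := by
    have := Fin.sum_univ_castSucc π
    linarith [hπ (Fin.last d)]
  have hΛpos : 0 < Λ θ := hΛθ ▸ sub_pos.2
    (halfSqDist_lt_one (fun j => (hpos j).le) (fun j => (hπ _).le) hps hrs)
  have hderiv : fderiv ℝ v θ (h θ)
      = -(Λ θ)⁻¹ * (∑ j, p j * h θ j ^ 2 - (∑ j, p j * h θ j) ^ 2) := by
    rw [hv', hhθ, fderiv_lyapunov_comp_expWeight_apply_sub hden.ne' (hΛθ ▸ hΛpos.ne'), ← hΛθ]
    rfl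
  have hbθ : b θ = ∑ j, p j := by simp only [hb, hp, p]
  have hq : ∀ j, Si θ j / (b θ * Stot θ) = p j / b θ := fun j => by
    rw [mul_comm, ← div_div, hp]
  have hvar : b θ * σξ2 θ + b θ * (1 - b θ) * μξ θ ^ 2
      = ∑ j, p j * h θ j ^ 2 - (∑ j, p j * h θ j) ^ 2 := by
    simp only [hσ, hμ, hq, ← hh]
    exact mul_variance_add_eq (hbθ ▸ (sum_pos (fun j _ => hpos j) ⟨⟨0, hd⟩, mem_univ _⟩).ne')
  refine ⟨by rw [hderiv, hvar, one_div], ?_, ?_⟩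
  · rw [hderiv]
    exact mul_nonpos_of_nonpos_of_nonneg (neg_nonpos.2 (inv_nonneg.2 hΛpos.le))
      (sub_nonneg.2 (sq_sum_mul_le_sum_mul_sq (fun j => (hpos j).le) hps.le _))
  · rw [hderiv, mul_eq_zero, neg_eq_zero, inv_eq_zero, or_iff_right hΛpos.ne', sub_eq_zero,
      eq_comm, sq_sum_mul_eq_sum_mul_sq_iff hpos hps]
end
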